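/- Let T be a string whose characters are pairwise distinct (a permutation string), and suppose T[i..j] is a Cartesian-tree rev-palindrome. Then the leftmost position m of the smallest character of T[i..j] equals the center (i+j)/2 of T[i..j]. -/

import Mathlib

/-- `sub S i j` is the substring `S[i..j]` (1-indexed, inclusive). -/
def sub {α : Type*} (S : List α) (i j : ℕ) : List α :=
  (S.drop (i - 1)).take (j - i + 1)

/-- unlabeled ordered binary trees -/
inductive BT : Type
  | leaf : BT
  | node : BT → BT → BT
deriving DecidableEq

/-- Cartesian tree, computed with a fuel argument (fuel `≥` length suffices). -/
def ctAux {α : Type*} [LinearOrder α] : ℕ → List α → BT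
  | 0, _ => .leaf
  | _, [] => .leaf
  | n + 1, x :: xs =>
    let l := x :: xs
    let i := l.idxOf (xs.foldl min x)   -- leftmost position of the minimum
    .node (ctAux n (l.take i)) (ctAux n (l.drop (i + 1)))

/-- the Cartesian tree `CT(l)` of a string `l`. -/
def ctree {α : Type*} [LinearOrder α] (l : List α) : BT :=
  ctAux l.length l

/-! The left subtree of the root of `CT(l)` has one node per letter of `l` before its minimum,
at position `m`; in the reversed string `n - 1 - m` letters precede the minimum. Isomorphic
trees have left subtrees of equal size, so `m = n - 1 - m`. -/

namespace BT

def size : BT → ℕ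
  | leaf => 0
  | node a b => a.size + b.size + 1

def left : BT → BT
  | leaf => leaf
  | node a _ => a

end BT

section

variable {α : Type*} [LinearOrder α]

theorem size_ctAux : ∀ (n : ℕ) (l : List α), l.length ≤ n → (ctAux n l).size = l.length
  | 0, l, hl => by simp_all [ctAux, BT.size]
  | _ + 1, [], _ => rfl
  | n + 1, x :: xs, hl => by
    have hidx : (x :: xs).idxOf (xs.foldl min x) < xs.length + 1 :=
      List.idxOf_lt_length_iff.2 (List.min?_mem List.min?_cons')
    simp only [List.length_cons] at hl
    simp only [ctAux, BT.size]
    rw [size_ctAux n _ (by rw [List.length_take]; omega),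
      size_ctAux n _ (by rw [List.length_drop, List.length_cons]; omega)]
    simp only [List.length_take, List.length_drop, List.length_cons]
    omega

theorem size_left_ctree_cons (x : α) (xs : List α) :
    (ctree (x :: xs)).left.size = (x :: xs).idxOf (xs.foldl min x) := by
  have hidx : (x :: xs).idxOf (xs.foldl min x) < xs.length + 1 :=
    List.idxOf_lt_length_iff.2 (List.min?_mem List.min?_cons')
  rw [ctree, List.length_cons, ctAux, BT.left,
    size_ctAux _ _ (by rw [List.length_take, List.length_cons]; omega)]
  simp only [List.length_take, List.length_cons]
  omega

theorem size_left_ctree_of_forall_getElem_le {l : List α} (hnd : l.Nodup) {m : ℕ}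
    (hm : m < l.length) (hmin : ∀ k (hk : k < l.length), l[m] ≤ l[k]) :
    (ctree l).left.size = m := by
  obtain _ | ⟨x, xs⟩ := l
  · simp at hm
  have hfold : xs.foldl min x = (x :: xs)[m] := by
    refine Option.some_injective _
      (List.min?_cons'.symm.trans (List.min?_eq_some_iff.2 ⟨?_, ?_⟩))
    · exact List.getElem_mem hm
    · intro b hb
      obtain ⟨k, hk, rfl⟩ := List.getElem_of_mem hb
      exact hmin k hk
  rw [size_left_ctree_cons, hfold, hnd.idxOf_getElem]

theorem size_left_ctree_reverse_of_forall_getElem_le {l : List α} (hnd : l.Nodup) {m : ℕ}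
    (hm : m < l.length) (hmin : ∀ k (hk : k < l.length), l[m] ≤ l[k]) :
    (ctree l.reverse).left.size = l.length - 1 - m := by
  refine size_left_ctree_of_forall_getElem_le (List.nodup_reverse.2 hnd)
    (by rw [List.length_reverse]; omega) fun k hk => ?_
  simp only [List.getElem_reverse]
  convert hmin _ _ using 2
  omega

theorem two_mul_add_one_eq_length_of_ctree_eq_ctree_reverse {l : List α} (hnd : l.Nodup)
    (hpal : ctree l = ctree l.reverse) {m : ℕ} (hm : m < l.length)
    (hmin : ∀ k (hk : k < l.length), l[m] ≤ l[k]) : 2 * m + 1 = l.length := by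
  have h := size_left_ctree_reverse_of_forall_getElem_le hnd hm hmin
  rw [← hpal, size_left_ctree_of_forall_getElem_le hnd hm hmin] at h
  omega

end

theorem stmt15 {α : Type*} [LinearOrder α] (T : List α) (i j : ℕ)
    (h1 : 1 ≤ i) (hij : i ≤ j) (hj : j ≤ T.length)
    (hnd : (sub T i j).Nodup)
    (hpal : ctree (sub T i j) = ctree ((sub T i j).reverse))
    (m : ℕ) (hm : m < (sub T i j).length)
    (hmin : ∀ k (hk : k < (sub T i j).length),
      (sub T i j).get ⟨m, hm⟩ ≤ (sub T i j).get ⟨k, hk⟩) :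
    2 * (i + m) = i + j := by
  have hlen : (sub T i j).length = j - i + 1 := by
    simp only [sub, List.length_take, List.length_drop]
    omega
  have := two_mul_add_one_eq_length_of_ctree_eq_ctree_reverse hnd hpal hm (by simpa using hmin)
  omega
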